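/- arXiv:2203.05259 — 2 statements merged into one kernel-verified Lean document; each statement's English description precedes it below -/
import Mathlib

section
/- Let n ≥ 2 and let λ₁,…,λₙ be real numbers with each λᵢ ≥ 0, not all zero. If Z_σ := |h|² - (1/n + σ)H² = 0 for some σ with 0 ≤ σ ≤ 1/(n(n-1)), where |h|² = Σλᵢ² and H = Σλᵢ and C = Σλᵢ³, then nC - (1 + nσ)H|h|² ≥ σ(1 + nσ)(1 - √(n(n-1)σ))H³. -/
/-!
Write `λ = H/n + μ` with `μ` traceless, so that `Z_σ = 0` says `|μ|² = σH²`, and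
`nC - (1 + nσ)H|h|² = n Σμᵢ³ + σ(1 - nσ)H³`. Okumura's inequality bounds `Σμᵢ³` from below by
`-(n-2)/√(n(n-1)) · |μ|³`; with `r = √(n(n-1))` and `t = √σ` the remaining gap is
at least `n t³H³(1 - rt)² / r ≥ 0`.
-/

open Finset

section Traceless

variable {ι : Type*} [Fintype ι]

noncomputable def traceless (a : ι → ℝ) : ι → ℝ := fun i => a i - (∑ j, a j) / Fintype.card ι

variable [Nonempty ι]

lemma sum_traceless (a : ι → ℝ) : ∑ i, traceless a i = 0 := by
  simp only [traceless, sum_sub_distrib, sum_const, card_univ, nsmul_eq_mul]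
  field_simp
  ring

lemma sum_traceless_sq (a : ι → ℝ) :
    ∑ i, traceless a i ^ 2 = ∑ i, a i ^ 2 - (∑ i, a i) ^ 2 / Fintype.card ι := by
  set m := (∑ j, a j) / Fintype.card ι with hm
  have expand : ∀ i, traceless a i ^ 2 = a i ^ 2 - 2 * m * a i + m ^ 2 := fun i => by
    simp only [traceless, ← hm]; ring
  simp only [expand, sum_add_distrib, sum_sub_distrib, ← mul_sum, sum_const, card_univ,
    nsmul_eq_mul, hm]
  field_simp
  ring

lemma sum_traceless_cube (a : ι → ℝ) :
    ∑ i, traceless a i ^ 3 = ∑ i, a i ^ 3 - 3 * (∑ i, a i) * (∑ i, a i ^ 2) / Fintype.card ι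
      + 2 * (∑ i, a i) ^ 3 / (Fintype.card ι) ^ 2 := by
  set m := (∑ j, a j) / Fintype.card ι with hm
  have expand : ∀ i, traceless a i ^ 3 = a i ^ 3 - 3 * m * a i ^ 2 + 3 * m ^ 2 * a i - m ^ 3 :=
    fun i => by simp only [traceless, ← hm]; ring
  simp only [expand, sum_add_distrib, sum_sub_distrib, ← mul_sum, sum_const, card_univ,
    nsmul_eq_mul, hm]
  field_simp
  ring

end Traceless

section Okumura

variable {ι : Type*} [Fintype ι] {μ : ι → ℝ}

lemma card_mul_sq_le_of_sum_eq_zero (hμ : ∑ j, μ j = 0) (i : ι) :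
    Fintype.card ι * μ i ^ 2 ≤ (Fintype.card ι - 1) * ∑ j, μ j ^ 2 := by
  classical
  have hrest : ∑ j ∈ univ.erase i, μ j = -μ i := by
    linarith [add_sum_erase univ μ (mem_univ i)]
  have hrest_sq : μ i ^ 2 + ∑ j ∈ univ.erase i, μ j ^ 2 = ∑ j, μ j ^ 2 :=
    add_sum_erase univ (fun j => μ j ^ 2) (mem_univ i)
  have hcard : ((univ.erase i).card : ℝ) = Fintype.card ι - 1 := by
    rw [card_erase_of_mem (mem_univ i), card_univ,
      Nat.cast_sub (Fintype.card_pos_iff.mpr ⟨i⟩), Nat.cast_one]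
  have hcs := sq_sum_le_card_mul_sum_sq (s := univ.erase i) (f := μ)
  rw [hrest, hcard] at hcs
  nlinarith

lemma neg_le_card_mul_of_sum_eq_zero (hμ : ∑ j, μ j = 0) {β : ℝ} (hβ : 0 ≤ β)
    (hμβ : ∑ j, μ j ^ 2 = β ^ 2) (i : ι) :
    -(√(Fintype.card ι * (Fintype.card ι - 1)) * β) ≤ Fintype.card ι * μ i := by
  have hn : (1 : ℝ) ≤ Fintype.card ι := by exact_mod_cast Fintype.card_pos_iff.mpr ⟨i⟩
  have hsq : (Fintype.card ι * μ i) ^ 2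
      ≤ (√(Fintype.card ι * (Fintype.card ι - 1)) * β) ^ 2 := by
    rw [mul_pow _ β, Real.sq_sqrt (by nlinarith), ← hμβ]
    nlinarith [card_mul_sq_le_of_sum_eq_zero hμ i]
  exact (abs_le_of_sq_le_sq' hsq (by positivity)).1

theorem okumura_sum_cube_ge (hn : 2 ≤ Fintype.card ι) (hμ : ∑ j, μ j = 0) {β : ℝ}
    (hβ : 0 ≤ β) (hμβ : ∑ j, μ j ^ 2 = β ^ 2) :
    -((Fintype.card ι : ℝ) - 2) * β ^ 3
      ≤ √(Fintype.card ι * (Fintype.card ι - 1)) * ∑ j, μ j ^ 3 := by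
  have hn' : (2 : ℝ) ≤ Fintype.card ι := by exact_mod_cast hn
  set n := (Fintype.card ι : ℝ) with hn_def
  set r := √(n * (n - 1))
  have hr2 : r ^ 2 = n * (n - 1) := Real.sq_sqrt (by nlinarith)
  have hr : 0 < r := Real.sqrt_pos.mpr (by nlinarith)
  -- each term is `≥ 0` since `nμⱼ ≥ -rβ`, and the sum is `n²(n-1) r (r Σμ³ + (n-2)β³)`
  have hterms : 0 ≤ ∑ j, (n * μ j + r * β) * (n * (n - 1) * μ j - r * β) ^ 2 :=
    sum_nonneg fun j _ =>
      mul_nonneg (neg_le_iff_add_nonneg.mp (neg_le_card_mul_of_sum_eq_zero hμ hβ hμβ j))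
        (sq_nonneg _)
  have expand : ∀ j, (n * μ j + r * β) * (n * (n - 1) * μ j - r * β) ^ 2
      = n ^ 3 * (n - 1) ^ 2 * μ j ^ 3 + n ^ 2 * (n - 1) * (n - 3) * r * β * μ j ^ 2
        + n * (r * β) ^ 2 * (3 - 2 * n) * μ j + (r * β) ^ 3 := fun j => by ring
  simp only [expand, sum_add_distrib, ← mul_sum, sum_const, card_univ, nsmul_eq_mul, hμ,
    hμβ, mul_zero, add_zero, ← hn_def] at hterms
  have hsum : n ^ 3 * (n - 1) ^ 2 * ∑ j, μ j ^ 3 + n ^ 2 * (n - 1) * (n - 3) * r * β * β ^ 2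
        + n * (r * β) ^ 3
      = n ^ 2 * (n - 1) * r * (r * ∑ j, μ j ^ 3 + (n - 2) * β ^ 3) := by
    linear_combination (n * r * β ^ 3 - n ^ 2 * (n - 1) * ∑ j, μ j ^ 3) * hr2
  have hfactor : 0 < n ^ 2 * (n - 1) * r := by
    have : 0 < n - 1 := by linarith
    positivity
  rw [hsum] at hterms
  linarith [(mul_nonneg_iff_of_pos_left hfactor).mp hterms]

end Okumura

lemma le_of_okumura_bound {n r t H S : ℝ} (hn : 0 ≤ n) (hr : 0 < r) (hr2 : r ^ 2 = n * (n - 1))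
    (ht : 0 ≤ t) (hH : 0 ≤ H) (hS : -(n - 2) * (t * H) ^ 3 ≤ r * S) :
    t ^ 2 * (1 + n * t ^ 2) * (1 - r * t) * H ^ 3 ≤ n * S + t ^ 2 * (1 - n * t ^ 2) * H ^ 3 := by
  have hgap : r * (n * S + t ^ 2 * (1 - n * t ^ 2) * H ^ 3
        - t ^ 2 * (1 + n * t ^ 2) * (1 - r * t) * H ^ 3)
      = n * (r * S + (n - 2) * (t * H) ^ 3) + n * t ^ 3 * H ^ 3 * (1 - r * t) ^ 2 := by
    linear_combination t ^ 3 * H ^ 3 * hr2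
  have hS' : 0 ≤ r * S + (n - 2) * (t * H) ^ 3 := by linarith
  have hscaled : 0 ≤ r * (n * S + t ^ 2 * (1 - n * t ^ 2) * H ^ 3
      - t ^ 2 * (1 + n * t ^ 2) * (1 - r * t) * H ^ 3) := by
    rw [hgap]
    positivity
  linarith [(mul_nonneg_iff_of_pos_left hr).mp hscaled]

theorem stmt2_general {n : ℕ} (hn : 2 ≤ n) (lam : Fin n → ℝ) (hpos : ∀ i, 0 ≤ lam i)
    (σ : ℝ) (hσ0 : 0 ≤ σ)
    (hZ : ∑ i, (lam i) ^ 2 - (1 / (n : ℝ) + σ) * (∑ i, lam i) ^ 2 = 0) :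
    (n : ℝ) * (∑ i, (lam i) ^ 3)
        - (1 + (n : ℝ) * σ) * (∑ i, lam i) * (∑ i, (lam i) ^ 2)
      ≥ σ * (1 + (n : ℝ) * σ) * (1 - Real.sqrt ((n : ℝ) * ((n : ℝ) - 1) * σ))
          * (∑ i, lam i) ^ 3 := by
  have hn' : (2 : ℝ) ≤ n := by exact_mod_cast hn
  have : NeZero n := ⟨by omega⟩
  set H := ∑ i, lam i with hH_def
  have hH : 0 ≤ H := sum_nonneg fun i _ => hpos i
  have hQ : ∑ i, lam i ^ 2 = (1 / n + σ) * H ^ 2 := by linarith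
  obtain ⟨t, ht, rfl⟩ : ∃ t, 0 ≤ t ∧ σ = t ^ 2 := ⟨√σ, Real.sqrt_nonneg σ, (Real.sq_sqrt hσ0).symm⟩
  have hμ2 : ∑ i, traceless lam i ^ 2 = (t * H) ^ 2 := by
    rw [sum_traceless_sq, hQ, Fintype.card_fin, ← hH_def]
    field_simp
    ring
  have hμ3 : n * ∑ i, traceless lam i ^ 3 = n * ∑ i, lam i ^ 3
      - (1 + n * t ^ 2) * H * ∑ i, lam i ^ 2 - t ^ 2 * (1 - n * t ^ 2) * H ^ 3 := by
    rw [sum_traceless_cube, hQ, Fintype.card_fin, ← hH_def]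
    field_simp
    ring
  have hok := okumura_sum_cube_ge (by simpa using hn) (sum_traceless lam) (by positivity) hμ2
  rw [Fintype.card_fin] at hok
  have hr2 : √(n * (n - 1) : ℝ) ^ 2 = n * (n - 1) := Real.sq_sqrt (by nlinarith)
  have hr : 0 < √(n * (n - 1) : ℝ) := Real.sqrt_pos.mpr (by nlinarith)
  rw [Real.sqrt_mul (by nlinarith), Real.sqrt_sq ht]
  linarith [le_of_okumura_bound (by linarith) hr hr2 ht hH hok]

/-- If `Z_σ = |h|² - (1/n + σ)H² = 0` for nonnegative, not all zero curvatures and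
`0 ≤ σ ≤ 1/(n(n-1))`, then `nC - (1+nσ)H|h|² ≥ σ(1+nσ)(1-√(n(n-1)σ))H³`. -/
theorem stmt2 {n : ℕ} (hn : 2 ≤ n) (lam : Fin n → ℝ) (hpos : ∀ i, 0 ≤ lam i)
    (hne : lam ≠ 0) (σ : ℝ) (hσ0 : 0 ≤ σ) (hσ1 : σ ≤ 1 / ((n : ℝ) * ((n : ℝ) - 1)))
    (hZ : ∑ i, (lam i) ^ 2 - (1 / (n : ℝ) + σ) * (∑ i, lam i) ^ 2 = 0) :
    (n : ℝ) * (∑ i, (lam i) ^ 3)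
        - (1 + (n : ℝ) * σ) * (∑ i, lam i) * (∑ i, (lam i) ^ 2)
      ≥ σ * (1 + (n : ℝ) * σ) * (1 - Real.sqrt ((n : ℝ) * ((n : ℝ) - 1) * σ))
          * (∑ i, lam i) ^ 3 :=
  stmt2_general hn lam hpos σ hσ0 hZ
end

section
/- Suppose ε > 0, C(ε) ≥ 0, and λ, μ ≥ 0 satisfy λ ≤ μ ≤ (1+ε)λ + C(ε). If additionally |h|² - H²/n ≤ σ₀ Mˡ H^{2-l} with H = λ + (n-1)μ (for constants σ₀, M > 0, 0 < l < 1, n ≥ 2), then using |h|² - H²/n = (n-1)(μ-λ)²/n, one gets (μ - λ)² ≤ (n/(n-1))·σ₀MˡH^{2-l}; hence μ - λ ≤ √(nσ₀/(n-1))·M^{l/2}·H^{1 - l/2}, so μ/λ → 1 as H → ∞ with the other constants fixed: precisely, for every ε > 0 there exists C(ε) (depending on n, σ₀, M, l) such that μ ≤ (1+ε)λ + C(ε). -/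
/-- Under the improved pinching `|h|² - H²/n ≤ σ₀MˡH^(2-l)` on axially stretched
data `0 ≤ lam ≤ mu` (with `H = lam + (n-1)mu`), one has
`(mu-lam)² ≤ (n/(n-1))σ₀MˡH^(2-l)` and `mu - lam ≤ √(nσ₀/(n-1))·M^(l/2)·H^(1-l/2)`;
consequently for every `ε > 0` there is `C(ε) ≥ 0` with `mu ≤ (1+ε)lam + C(ε)`. -/
theorem stmt18 {n : ℕ} (hn : 2 ≤ n) (σ₀ M l : ℝ) (hσ : 0 < σ₀) (hM : 0 < M)
    (hl0 : 0 < l) (hl1 : l < 1) :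
    (∀ lam mu : ℝ, 0 ≤ lam → lam ≤ mu →
      lam ^ 2 + ((n : ℝ) - 1) * mu ^ 2
          - (lam + ((n : ℝ) - 1) * mu) ^ 2 / (n : ℝ)
        ≤ σ₀ * M ^ l * (lam + ((n : ℝ) - 1) * mu) ^ (2 - l) →
      (mu - lam) ^ 2
          ≤ ((n : ℝ) / ((n : ℝ) - 1)) * σ₀ * M ^ l
            * (lam + ((n : ℝ) - 1) * mu) ^ (2 - l) ∧
        mu - lam ≤ Real.sqrt ((n : ℝ) * σ₀ / ((n : ℝ) - 1)) * M ^ (l / 2)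
          * (lam + ((n : ℝ) - 1) * mu) ^ (1 - l / 2)) ∧
    (∀ ε > (0 : ℝ), ∃ C ≥ (0 : ℝ), ∀ lam mu : ℝ, 0 ≤ lam → lam ≤ mu →
      lam ^ 2 + ((n : ℝ) - 1) * mu ^ 2
          - (lam + ((n : ℝ) - 1) * mu) ^ 2 / (n : ℝ)
        ≤ σ₀ * M ^ l * (lam + ((n : ℝ) - 1) * mu) ^ (2 - l) →
      mu ≤ (1 + ε) * lam + C) := by
  have hN : (2:ℝ) ≤ (n:ℝ) := by exact_mod_cast hn
  have hN0 : (0:ℝ) < (n:ℝ) := by linarith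
  have hN1 : (0:ℝ) < (n:ℝ) - 1 := by linarith
  have key : ∀ lam mu : ℝ, 0 ≤ lam → lam ≤ mu →
      lam ^ 2 + ((n : ℝ) - 1) * mu ^ 2
          - (lam + ((n : ℝ) - 1) * mu) ^ 2 / (n : ℝ)
        ≤ σ₀ * M ^ l * (lam + ((n : ℝ) - 1) * mu) ^ (2 - l) →
      (mu - lam) ^ 2
          ≤ ((n : ℝ) / ((n : ℝ) - 1)) * σ₀ * M ^ l
            * (lam + ((n : ℝ) - 1) * mu) ^ (2 - l) ∧
        mu - lam ≤ Real.sqrt ((n : ℝ) * σ₀ / ((n : ℝ) - 1)) * M ^ (l / 2)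
          * (lam + ((n : ℝ) - 1) * mu) ^ (1 - l / 2) := by
    intro lam mu hlam hlm hyp
    set H : ℝ := lam + ((n : ℝ) - 1) * mu with hH
    have hmu : 0 ≤ mu := le_trans hlam hlm
    have hH0 : 0 ≤ H := by
      have : 0 ≤ ((n:ℝ) - 1) * mu := mul_nonneg (by linarith) hmu
      simp only [hH]; linarith
    have hid : lam ^ 2 + ((n : ℝ) - 1) * mu ^ 2 - H ^ 2 / (n : ℝ)
        = (((n:ℝ) - 1) / (n:ℝ)) * (mu - lam) ^ 2 := by
      field_simp [hH]
      ring
    rw [hid] at hyp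
    have sq1 : (mu - lam) ^ 2
        ≤ ((n : ℝ) / ((n : ℝ) - 1)) * (σ₀ * M ^ l * H ^ (2 - l)) := by
      have h1 : (mu - lam) ^ 2
          = ((n : ℝ) / ((n : ℝ) - 1)) * ((((n:ℝ) - 1) / (n:ℝ)) * (mu - lam) ^ 2) := by
        field_simp
      rw [h1]
      exact mul_le_mul_of_nonneg_left hyp (by positivity)
    constructor
    · calc (mu - lam) ^ 2 ≤ ((n : ℝ) / ((n : ℝ) - 1)) * (σ₀ * M ^ l * H ^ (2 - l)) := sq1
        _ = ((n : ℝ) / ((n : ℝ) - 1)) * σ₀ * M ^ l * H ^ (2 - l) := by ring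
    · have sq2 : (mu - lam) ^ 2
          ≤ ((n:ℝ) * σ₀ / ((n:ℝ) - 1)) * (M ^ l * H ^ (2 - l)) := by
        calc (mu - lam) ^ 2 ≤ ((n : ℝ) / ((n : ℝ) - 1)) * (σ₀ * M ^ l * H ^ (2 - l)) := sq1
          _ = ((n:ℝ) * σ₀ / ((n:ℝ) - 1)) * (M ^ l * H ^ (2 - l)) := by ring
      have h2 : mu - lam = Real.sqrt ((mu - lam) ^ 2) :=
        (Real.sqrt_sq (by linarith)).symm
      rw [h2]
      calc Real.sqrt ((mu - lam) ^ 2)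
          ≤ Real.sqrt (((n:ℝ) * σ₀ / ((n:ℝ) - 1)) * (M ^ l * H ^ (2 - l))) :=
            Real.sqrt_le_sqrt sq2
        _ = Real.sqrt ((n:ℝ) * σ₀ / ((n:ℝ) - 1)) * (Real.sqrt (M ^ l) * Real.sqrt (H ^ (2 - l))) := by
            rw [Real.sqrt_mul (by positivity), Real.sqrt_mul (by positivity)]
        _ = Real.sqrt ((n:ℝ) * σ₀ / ((n:ℝ) - 1)) * M ^ (l / 2) * H ^ (1 - l / 2) := by
            rw [Real.sqrt_eq_rpow (M ^ l), Real.sqrt_eq_rpow (H ^ (2 - l)),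
              ← Real.rpow_mul hM.le, ← Real.rpow_mul hH0]
            norm_num
            rw [show (2 - l) * (1 / 2) = 1 - l / 2 by ring]
            ring
  refine ⟨key, ?_⟩
  intro ε hε
  set A : ℝ := Real.sqrt ((n:ℝ) * σ₀ / ((n:ℝ) - 1)) * M ^ (l / 2) * (n:ℝ) ^ (1 - l / 2)
    with hA
  have hA0 : 0 ≤ A := by positivity
  set B : ℝ := max (A * (1 + ε) / ε) 1 with hB
  have hB1 : (1:ℝ) ≤ B := le_max_right _ _
  have hB0 : (0:ℝ) ≤ B := by linarith
  refine ⟨B ^ ((2:ℝ) / l), le_of_lt (Real.rpow_pos_of_pos (by linarith) _), ?_⟩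
  intro lam mu hlam hlm hyp
  set D : ℝ := B ^ ((2:ℝ) / l) with hD
  have hD1 : (1:ℝ) ≤ D := Real.one_le_rpow hB1 (by positivity)
  by_cases hcase : mu ≤ D
  · nlinarith [mul_nonneg (le_of_lt hε) hlam]
  · push_neg at hcase
    have hmu0 : (0:ℝ) < mu := by linarith
    have h2 := (key lam mu hlam hlm hyp).2
    set H : ℝ := lam + ((n : ℝ) - 1) * mu with hH
    have hH0 : 0 ≤ H := by
      have : 0 ≤ ((n:ℝ) - 1) * mu := mul_nonneg (by linarith) hmu0.le
      simp only [hH]; linarith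
    have hHle : H ≤ (n:ℝ) * mu := by simp only [hH]; nlinarith
    have hexp : (0:ℝ) ≤ 1 - l / 2 := by linarith
    have hpow : H ^ (1 - l / 2) ≤ ((n:ℝ) * mu) ^ (1 - l / 2) :=
      Real.rpow_le_rpow hH0 hHle hexp
    have hmul : ((n:ℝ) * mu) ^ (1 - l / 2) = (n:ℝ) ^ (1 - l / 2) * mu ^ (1 - l / 2) :=
      Real.mul_rpow hN0.le hmu0.le
    have key2 : mu - lam ≤ A * mu ^ (1 - l / 2) := by
      have c0 : 0 ≤ Real.sqrt ((n:ℝ) * σ₀ / ((n:ℝ) - 1)) * M ^ (l / 2) := by positivity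
      calc mu - lam ≤ Real.sqrt ((n:ℝ) * σ₀ / ((n:ℝ) - 1)) * M ^ (l / 2) * H ^ (1 - l / 2) := h2
        _ ≤ Real.sqrt ((n:ℝ) * σ₀ / ((n:ℝ) - 1)) * M ^ (l / 2) * (((n:ℝ)) * mu) ^ (1 - l / 2) := by
            exact mul_le_mul_of_nonneg_left hpow c0
        _ = A * mu ^ (1 - l / 2) := by rw [hmul, hA]; ring
    -- mu^(l/2) ≥ B ≥ A(1+ε)/ε
    have hDpow : D ^ (l / 2) = B := by
      rw [hD, ← Real.rpow_mul hB0]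
      have : (2:ℝ) / l * (l / 2) = 1 := by field_simp
      rw [this, Real.rpow_one]
    have hmupow : B ≤ mu ^ (l / 2) := by
      rw [← hDpow]
      exact Real.rpow_le_rpow (by linarith) hcase.le (by positivity)
    have hsplit : mu ^ (1 - l / 2) * mu ^ (l / 2) = mu := by
      rw [← Real.rpow_add hmu0]
      norm_num
    have hfin : A * mu ^ (1 - l / 2) ≤ ε / (1 + ε) * mu := by
      have hAB : A * (1 + ε) / ε ≤ mu ^ (l / 2) :=
        le_trans (le_max_left _ _) hmupow
      have hpos : 0 ≤ mu ^ (1 - l / 2) := Real.rpow_nonneg hmu0.le _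
      have step := mul_le_mul_of_nonneg_right hAB hpos
      have hε1 : (0:ℝ) < 1 + ε := by linarith
      calc A * mu ^ (1 - l / 2)
          = ε / (1 + ε) * (A * (1 + ε) / ε * mu ^ (1 - l / 2)) := by
            field_simp
        _ ≤ ε / (1 + ε) * (mu ^ (l / 2) * mu ^ (1 - l / 2)) :=
            mul_le_mul_of_nonneg_left step (by positivity)
        _ = ε / (1 + ε) * mu := by rw [mul_comm (mu ^ (l/2)) _, hsplit]
    have hml : mu - lam ≤ ε / (1 + ε) * mu := le_trans key2 hfin
    have hε1 : (0:ℝ) < 1 + ε := by linarith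
    have hq : (1 + ε) * (mu - lam) ≤ ε * mu := by
      have := mul_le_mul_of_nonneg_left hml hε1.le
      calc (1 + ε) * (mu - lam) ≤ (1 + ε) * (ε / (1 + ε) * mu) := this
        _ = ε * mu := by field_simp
    have hD0 : (0:ℝ) ≤ D := by positivity
    have hq2 : mu ≤ (1 + ε) * lam := by ring_nf at hq ⊢; linarith
    linarith
end
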